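/- arXiv:1905.07850 — 4 statements merged into one kernel-verified Lean document; each statement's English description precedes it below -/
import Mathlib

section
/- Suppose for each string τ ∈ ℕ^{<ω} we have a finite set H_τ ⊆ ℕ satisfying: for all τ and i, i ∈ H_τ ⟺ |H_{τ⌢i}| is odd. Then the map g(F,τ) = (F △ H_τ, τ) is an automorphism of the structure with relations W_σ, E_i, P as defined. -/
/-!
The map `g` is an involution that preserves the string coordinate, so it is bijective and
preserves every `W σ`; it preserves `E i` because `(F ∆ H τ) ∆ (G ∆ H τ) = F ∆ G`.
For `P`, with `ρ = τ ⌢ i`, the relation `P((F,τ),(G,ρ))` says `i ∈ F ↔ Odd |G|`. Applying `g` toggles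
`i ∈ F` exactly when `i ∈ H τ`, and toggles the parity of `|G|` exactly when `|H ρ|` is odd,
because `|A ∆ B| ≡ |A| + |B| (mod 2)`; the hypothesis on `H` says these two toggles coincide.
-/

open scoped symmDiff

/-- `W σ` singles out the elements whose string coordinate is `σ`. -/
def Wrel (σ : List ℕ) (x : Finset ℕ × List ℕ) : Prop := σ = x.2

/-- `E i` holds between elements with the same string coordinate whose first
coordinates have symmetric difference `{i}`. -/
def Erel (i : ℕ) (x y : Finset ℕ × List ℕ) : Prop :=
  x.2 = y.2 ∧ x.1 ∆ y.1 = {i}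

/-- The parity relation `P`. -/
def Prel (x y : Finset ℕ × List ℕ) : Prop :=
  ∃ i : ℕ, y.2 = x.2 ++ [i] ∧
    ((i ∉ x.1 ∧ Even y.1.card) ∨ (i ∈ x.1 ∧ Odd y.1.card))

theorem Finset.card_symmDiff_add_two_mul_card_inter {α : Type*} [DecidableEq α] (s t : Finset α) :
    (s ∆ t).card + 2 * (s ∩ t).card = s.card + t.card := by
  rw [symmDiff_eq_sup_sdiff_inf, ← card_union_add_card_inter,
    card_sdiff_of_subset (inf_le_sup (a := s) (b := t))]
  have := card_le_card (inf_le_sup (a := s) (b := t))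
  simp only [sup_eq_union, inf_eq_inter] at *
  omega

theorem Finset.odd_card_symmDiff_iff {α : Type*} [DecidableEq α] (s t : Finset α) :
    Odd (s ∆ t).card ↔ ¬(Odd s.card ↔ Odd t.card) := by
  have h := card_symmDiff_add_two_mul_card_inter s t
  simp only [Nat.odd_iff]
  omega

theorem prel_iff_mem_iff_odd {x y : Finset ℕ × List ℕ} :
    Prel x y ↔ ∃ i, y.2 = x.2 ++ [i] ∧ (i ∈ x.1 ↔ Odd y.1.card) := by
  simp only [Prel, ← Nat.not_even_iff_odd]
  exact exists_congr fun i => and_congr_right fun _ => by tauto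

section Twist

variable (H : List ℕ → Finset ℕ)

def twist (x : Finset ℕ × List ℕ) : Finset ℕ × List ℕ := (x.1 ∆ H x.2, x.2)

theorem twist_involutive : Function.Involutive (twist H) := fun x => by
  simp only [twist, symmDiff_symmDiff_cancel_right]

theorem wrel_twist_iff {σ : List ℕ} {x : Finset ℕ × List ℕ} :
    Wrel σ (twist H x) ↔ Wrel σ x := Iff.rfl

theorem erel_twist_iff {i : ℕ} {x y : Finset ℕ × List ℕ} :
    Erel i (twist H x) (twist H y) ↔ Erel i x y := by
  simp only [Erel, twist]
  refine and_congr_right fun hxy => ?_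
  rw [hxy, symmDiff_symmDiff_symmDiff_comm, symmDiff_self, symmDiff_bot]

theorem prel_twist_iff (hpar : ∀ τ i, i ∈ H τ ↔ Odd (H (τ ++ [i])).card)
    {x y : Finset ℕ × List ℕ} : Prel (twist H x) (twist H y) ↔ Prel x y := by
  simp only [prel_iff_mem_iff_odd, twist]
  refine exists_congr fun i => and_congr_right fun hy => ?_
  rw [Finset.mem_symmDiff, hy, Finset.odd_card_symmDiff_iff, ← hpar]
  tauto

end Twist

theorem stmt_12 (H : List ℕ → Finset ℕ)
    (hpar : ∀ (τ : List ℕ) (i : ℕ), i ∈ H τ ↔ Odd (H (τ ++ [i])).card)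
    (g : Finset ℕ × List ℕ → Finset ℕ × List ℕ)
    (hg : ∀ x, g x = (x.1 ∆ H x.2, x.2)) :
    Function.Bijective g ∧
    (∀ (σ : List ℕ) (x), Wrel σ x ↔ Wrel σ (g x)) ∧
    (∀ (i : ℕ) (x y), Erel i x y ↔ Erel i (g x) (g y)) ∧
    (∀ x y, Prel x y ↔ Prel (g x) (g y)) := by
  obtain rfl : g = twist H := funext hg
  exact ⟨(twist_involutive H).bijective, fun _ _ => (wrel_twist_iff H).symm,
    fun _ _ _ => (erel_twist_iff H).symm, fun _ _ => (prel_twist_iff H hpar).symm⟩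
end

section
/- If g is an automorphism of the structure ([ℕ]^{<ω} × ℕ^{<ω}; W_σ, E_i, P) then for every string τ there exists a finite set H_τ such that g((G,τ)) = (G △ H_τ, τ) for all finite G, and these sets satisfy i ∈ H_τ ⟺ |H_{τ⌢i}| is odd. -/
open scoped symmDiff

theorem stmt_14 (g : Finset ℕ × List ℕ → Finset ℕ × List ℕ)
    (hbij : Function.Bijective g)
    (hW : ∀ (σ : List ℕ) (x), Wrel σ x ↔ Wrel σ (g x))
    (hE : ∀ (i : ℕ) (x y), Erel i x y ↔ Erel i (g x) (g y))
    (hP : ∀ x y, Prel x y ↔ Prel (g x) (g y)) :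
    ∃ H : List ℕ → Finset ℕ,
      (∀ (τ : List ℕ) (G : Finset ℕ), g (G, τ) = (G ∆ H τ, τ)) ∧
      (∀ (τ : List ℕ) (i : ℕ), i ∈ H τ ↔ Odd (H (τ ++ [i])).card) := by

  classical
  have hsnd : ∀ x, (g x).2 = x.2 := fun x => ((hW x.2 x).mp rfl).symm
  set H : List ℕ → Finset ℕ := fun τ => (g (∅, τ)).1 with hH
  have key : ∀ (τ : List ℕ) (G : Finset ℕ), (g (G, τ)).1 = G ∆ H τ := by
    intro τ G
    induction G using Finset.induction_on with
    | empty => rw [hH]; exact (bot_symmDiff _).symm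
    | @insert a G ha ih =>
      have hGi : G ∆ insert a G = {a} := by
        ext x
        simp only [Finset.mem_symmDiff, Finset.mem_insert, Finset.mem_singleton]
        constructor
        · rintro (⟨hx, h⟩ | ⟨h, hx⟩)
          · exact absurd (Or.inr hx) h
          · rcases h with h | h
            · exact h
            · exact absurd h hx
        · rintro rfl
          exact Or.inr ⟨Or.inl rfl, ha⟩
      have hE' := (hE a (G, τ) (insert a G, τ)).mp ⟨rfl, hGi⟩
      have h2 : (g (G, τ)).1 ∆ (g (insert a G, τ)).1 = {a} := hE'.2
      have h3 : (g (insert a G, τ)).1 = (g (G, τ)).1 ∆ {a} := by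
        rw [← h2, symmDiff_symmDiff_cancel_left]
      have hins : insert a G = G ∆ {a} := by
        ext x
        simp only [Finset.mem_symmDiff, Finset.mem_insert, Finset.mem_singleton]
        constructor
        · rintro (rfl | hx)
          · exact Or.inr ⟨rfl, ha⟩
          · exact Or.inl ⟨hx, fun h => ha (h ▸ hx)⟩
        · rintro (⟨hx, _⟩ | ⟨rfl, _⟩)
          · exact Or.inr hx
          · exact Or.inl rfl
      rw [h3, ih, hins, symmDiff_assoc, symmDiff_comm (H τ) {a}, ← symmDiff_assoc]
  refine ⟨H, ?_, ?_⟩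
  · intro τ G
    have := hsnd (G, τ)
    exact Prod.ext (key τ G) this
  · intro τ i
    have hp0 : Prel (∅, τ) ((∅ : Finset ℕ), τ ++ [i]) := by
      exact ⟨i, rfl, Or.inl ⟨Finset.notMem_empty i, by simp⟩⟩
    have hp := (hP (∅, τ) (∅, τ ++ [i])).mp hp0
    obtain ⟨j, hj, hcase⟩ := hp
    rw [hsnd, hsnd] at hj
    have hji : j = i := by simp at hj; omega
    subst hji
    have h1 : (g ((∅ : Finset ℕ), τ)).1 = H τ := rfl
    have h2 : (g ((∅ : Finset ℕ), τ ++ [j])).1 = H (τ ++ [j]) := rfl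
    rw [h1, h2] at hcase
    constructor
    · intro hi
      rcases hcase with ⟨hn, _⟩ | ⟨_, ho⟩
      · exact absurd hi hn
      · exact ho
    · intro ho
      rcases hcase with ⟨_, he⟩ | ⟨hi, _⟩
      · exact absurd ho (Nat.not_odd_iff_even.mpr he)
      · exact hi
end

section
/- For the structure A on universe [ℕ]^{<ω} × ℕ^{<ω} with relations W_σ, E_i, P and unary predicates S_n coding a tree Q (S_n((F,σ)) holds for all n, F when σ ∈ Q; for σ ∉ Q there is n_σ with S_{n_σ}((F,σ)) ⟺ F = ∅), any automorphism of A fixes (F,σ) ↦ (F △ H_σ, σ) with H_σ = ∅ for every σ ∉ Q. -/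
/-!
For `σ ∉ Q` the predicate `S n_σ` singles out `(∅, σ)` in the `W σ`-fibre, so an automorphism
fixes it. An `E i`-edge leaving `(F, σ)` with `i ∉ F` can only end at `(insert i F, σ)`, so by
induction on `F` the automorphism fixes every `(F, σ)`.
-/

open scoped symmDiff

theorem Finset.symmDiff_singleton_of_notMem {α : Type*} [DecidableEq α] {F : Finset α} {i : α}
    (hi : i ∉ F) : F ∆ {i} = insert i F := by
  rw [(Finset.disjoint_singleton_right.mpr hi).symmDiff_eq_sup, Finset.sup_eq_union,
    Finset.union_singleton]

theorem erel_insert {i : ℕ} {F : Finset ℕ} (σ : List ℕ) (hi : i ∉ F) :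
    Erel i (F, σ) (insert i F, σ) :=
  ⟨rfl, by rw [← Finset.symmDiff_singleton_of_notMem hi, symmDiff_symmDiff_cancel_left]⟩

theorem eq_insert_of_erel {i : ℕ} {F : Finset ℕ} {σ : List ℕ} {y : Finset ℕ × List ℕ}
    (hi : i ∉ F) (h : Erel i (F, σ) y) : y = (insert i F, σ) := by
  obtain ⟨hσ, hF⟩ := h
  refine Prod.ext ?_ hσ.symm
  rw [← Finset.symmDiff_singleton_of_notMem hi, ← hF, symmDiff_symmDiff_cancel_left]

theorem apply_eq_self_of_apply_empty {g : Finset ℕ × List ℕ → Finset ℕ × List ℕ}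
    (hE : ∀ (i : ℕ) (x y), Erel i x y → Erel i (g x) (g y)) {σ : List ℕ}
    (h₀ : g (∅, σ) = (∅, σ)) (F : Finset ℕ) : g (F, σ) = (F, σ) := by
  induction F using Finset.induction_on with
  | empty => exact h₀
  | insert i F hi ih =>
    have hedge := hE i _ _ (erel_insert σ hi)
    rw [ih] at hedge
    exact eq_insert_of_erel hi hedge

theorem apply_empty_eq_self {g : Finset ℕ × List ℕ → Finset ℕ × List ℕ} {σ : List ℕ}
    (hW : ∀ x, Wrel σ x → Wrel σ (g x)) {p : Finset ℕ × List ℕ → Prop}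
    (hp : ∀ x, p x → p (g x)) (hpσ : ∀ F : Finset ℕ, p (F, σ) ↔ F = ∅) :
    g (∅, σ) = (∅, σ) := by
  have hσ : (g (∅, σ)).2 = σ := (hW (∅, σ) rfl).symm
  have hp₀ : p ((g (∅, σ)).1, σ) := by
    rw [show ((g (∅, σ)).1, σ) = g (∅, σ) from Prod.ext rfl hσ.symm]
    exact hp _ ((hpσ ∅).mpr rfl)
  exact Prod.ext ((hpσ _).mp hp₀) hσ

theorem stmt_18_general (Q : Set (List ℕ))
    (S : ℕ → Finset ℕ × List ℕ → Prop)
    (hSout : ∀ σ ∉ Q, ∃ n : ℕ, ∀ F : Finset ℕ, S n (F, σ) ↔ F = ∅)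
    (g : Finset ℕ × List ℕ → Finset ℕ × List ℕ)
    (hW : ∀ (σ : List ℕ) (x), Wrel σ x ↔ Wrel σ (g x))
    (hE : ∀ (i : ℕ) (x y), Erel i x y ↔ Erel i (g x) (g y))
    (hS : ∀ (n : ℕ) (x), S n x ↔ S n (g x)) :
    ∀ σ ∉ Q, ∀ F : Finset ℕ, g (F, σ) = (F, σ) := by
  intro σ hσ
  obtain ⟨n, hn⟩ := hSout σ hσ
  have h₀ : g (∅, σ) = (∅, σ) :=
    apply_empty_eq_self (fun x => (hW σ x).mp) (fun x => (hS n x).mp) hn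
  exact apply_eq_self_of_apply_empty (fun i x y => (hE i x y).mp) h₀

theorem stmt_18 (Q : Set (List ℕ))
    (hQ : ∀ σ τ : List ℕ, σ <+: τ → τ ∈ Q → σ ∈ Q)
    (S : ℕ → Finset ℕ × List ℕ → Prop)
    (hSin : ∀ σ ∈ Q, ∀ (n : ℕ) (F : Finset ℕ), S n (F, σ))
    (hSout : ∀ σ ∉ Q, ∃ n : ℕ, ∀ F : Finset ℕ, S n (F, σ) ↔ F = ∅)
    (g : Finset ℕ × List ℕ → Finset ℕ × List ℕ)
    (hbij : Function.Bijective g)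
    (hW : ∀ (σ : List ℕ) (x), Wrel σ x ↔ Wrel σ (g x))
    (hE : ∀ (i : ℕ) (x y), Erel i x y ↔ Erel i (g x) (g y))
    (hP : ∀ x y, Prel x y ↔ Prel (g x) (g y))
    (hS : ∀ (n : ℕ) (x), S n x ↔ S n (g x)) :
    ∀ σ ∉ Q, ∀ F : Finset ℕ, g (F, σ) = (F, σ) :=
  stmt_18_general Q S hSout g hW hE hS
end

section
/- Let Q ⊆ ℕ^{<ω} be a tree (closed under initial segments). An automorphism of A sending (∅,σ) to (F,σ) with F ≠ ∅ yields, for each i ∈ F, an infinite path through Q extending σ⌢i: there is a strictly increasing sequence σ⌢i = σ₀ ⊂ σ₁ ⊂ ... with every σ_j ∈ Q. -/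
open scoped symmDiff

theorem stmt_19 (Q : Set (List ℕ))
    (hQ : ∀ σ τ : List ℕ, σ <+: τ → τ ∈ Q → σ ∈ Q)
    (S : ℕ → Finset ℕ × List ℕ → Prop)
    (hSin : ∀ σ ∈ Q, ∀ (n : ℕ) (F : Finset ℕ), S n (F, σ))
    (hSout : ∀ σ ∉ Q, ∃ n : ℕ, ∀ F : Finset ℕ, S n (F, σ) ↔ F = ∅)
    (g : Finset ℕ × List ℕ → Finset ℕ × List ℕ)
    (hbij : Function.Bijective g)
    (hW : ∀ (σ' : List ℕ) (x), Wrel σ' x ↔ Wrel σ' (g x))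
    (hE : ∀ (i : ℕ) (x y), Erel i x y ↔ Erel i (g x) (g y))
    (hP : ∀ x y, Prel x y ↔ Prel (g x) (g y))
    (hS : ∀ (n : ℕ) (x), S n x ↔ S n (g x))
    (σ : List ℕ) (F : Finset ℕ) (hF : F ≠ ∅)
    (hmove : g (∅, σ) = (F, σ)) (i : ℕ) (hi : i ∈ F) :
    ∃ seq : ℕ → List ℕ,
      seq 0 = σ ++ [i] ∧
      ∀ j : ℕ, seq j ∈ Q ∧ seq j <+: seq (j + 1) ∧
        (seq j).length < (seq (j + 1)).length := by

  -- g fixes the string coordinate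
  have hsnd : ∀ x : Finset ℕ × List ℕ, (g x).2 = x.2 := fun x =>
    ((hW x.2 x).mp rfl).symm
  have hg : ∀ τ : List ℕ, g (∅, τ) = ((g (∅, τ)).1, τ) :=
    fun τ => Prod.ext rfl (hsnd (∅, τ))
  -- one step down preserves nonemptiness
  have step : ∀ (τ : List ℕ) (k : ℕ), k ∈ (g (∅, τ)).1 →
      (g (∅, τ ++ [k])).1 ≠ ∅ := by
    intro τ k hk
    have hP0 : Prel (∅, τ) (∅, τ ++ [k]) :=
      ⟨k, rfl, Or.inl ⟨Finset.notMem_empty k, by simp⟩⟩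
    have hP1 := (hP _ _).mp hP0
    rw [hg τ, hg (τ ++ [k])] at hP1
    obtain ⟨i', hi', hcase⟩ := hP1
    have hki : k = i' := by
      have := List.append_cancel_left hi'
      simpa using this
    subst hki
    rcases hcase with ⟨h1, _⟩ | ⟨_, h2⟩
    · exact absurd hk h1
    · intro hE0
      rw [hE0] at h2
      simp at h2
  -- nonemptiness forces membership in Q
  have memQ : ∀ τ : List ℕ, (g (∅, τ)).1 ≠ ∅ → τ ∈ Q := by
    intro τ hne
    by_contra hτ
    obtain ⟨n, hn⟩ := hSout τ hτ
    have h1 : S n (∅, τ) := (hn ∅).mpr rfl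
    have h2 := (hS n (∅, τ)).mp h1
    rw [hg τ] at h2
    exact hne ((hn _).mp h2)
  have h0 : (g (∅, σ ++ [i])).1 ≠ ∅ := by
    refine step σ i ?_
    rw [hmove]
    exact hi
  set next : List ℕ → List ℕ :=
    fun τ => τ ++ [sInf {k : ℕ | k ∈ (g (∅, τ)).1}] with hnext
  have inv : ∀ j, (g (∅, next^[j] (σ ++ [i]))).1 ≠ ∅ := by
    intro j
    induction j with
    | zero => exact h0
    | succ j ih =>
      rw [Function.iterate_succ_apply']
      refine step _ _ ?_
      have hne : ({k : ℕ | k ∈ (g (∅, next^[j] (σ ++ [i]))).1} : Set ℕ).Nonempty := by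
        obtain ⟨x, hx⟩ := Finset.nonempty_iff_ne_empty.mpr ih
        exact ⟨x, hx⟩
      exact Nat.sInf_mem hne
  refine ⟨fun j => next^[j] (σ ++ [i]), rfl, ?_⟩
  intro j
  refine ⟨memQ _ (inv j), ?_, ?_⟩
  · show next^[j] (σ ++ [i]) <+: next^[j + 1] (σ ++ [i])
    rw [Function.iterate_succ_apply']
    exact List.prefix_append _ _
  · show (next^[j] (σ ++ [i])).length < (next^[j + 1] (σ ++ [i])).length
    rw [Function.iterate_succ_apply']
    simp [hnext]
end
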